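/- Let Θ' ∈ ℝ^{n×p} be a matrix each of whose rows is monotone (for each row i, either θ'_{i,j} ≤ θ'_{i,j+1} for all j, or θ'_{i,j} ≥ θ'_{i,j+1} for all j). Let m ∈ {−1,1}ⁿ with m_i = 1 if row i is nondecreasing and m_i = −1 otherwise, and suppose the rows of Θ' each have coordinates summing to zero. Then for any unit vector x ∈ ℝⁿ, ∑_{j=1}^p (∑_{i=1}^n x_i θ'_{ij})² ≤ ∑_{j=1}^p (∑_{i=1}^n m_i |x_i| θ'_{ij})². -/
import Mathlib

private lemma cheb_nonneg {p : ℕ} (u v : Fin p → ℝ)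
    (hu : ∀ j k : Fin p, j ≤ k → u j ≤ u k)
    (hv : ∀ j k : Fin p, j ≤ k → v j ≤ v k)
    (hsu : ∑ j, u j = 0) : 0 ≤ ∑ j, u j * v j := by
  rcases Nat.eq_zero_or_pos p with hp | hp
  · subst hp; simp
  have hmono : Monovary u v := by
    intro i j h
    exact hu i j (le_of_not_ge fun hle => absurd (hv j i hle) (not_le.2 h))
  have h2 := hmono.sum_mul_sum_le_card_mul_sum
  rw [hsu, zero_mul, Fintype.card_fin] at h2
  have hcard : (0:ℝ) < (p:ℝ) := by exact_mod_cast hp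
  nlinarith [h2, hcard]

/-- Sign-aligning the coefficients with the direction of row monotonicity
increases the quadratic form associated to a row-monotone, row-centered matrix. -/
theorem stmt_4 (n p : ℕ) (Θ : Fin n → Fin p → ℝ)
    (m : Fin n → ℝ)
    (hm : ∀ i, (m i = 1 ∧ ∀ j k : Fin p, j ≤ k → Θ i j ≤ Θ i k) ∨
               (m i = -1 ∧ (∀ j k : Fin p, j ≤ k → Θ i k ≤ Θ i j) ∧
                 ¬ (∀ j k : Fin p, j ≤ k → Θ i j ≤ Θ i k)))
    (hcenter : ∀ i, ∑ j, Θ i j = 0)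
    (x : Fin n → ℝ) (hx : ∑ i, (x i) ^ 2 = 1) :
    ∑ j, (∑ i, x i * Θ i j) ^ 2 ≤ ∑ j, (∑ i, m i * |x i| * Θ i j) ^ 2 := by
  -- rewrite both sides as double sums over i, i'
  have expand : ∀ a : Fin n → ℝ,
      ∑ j, (∑ i, a i * Θ i j) ^ 2
        = ∑ i, ∑ i', a i * a i' * ∑ j, Θ i j * Θ i' j := by
    intro a
    simp_rw [sq, Finset.sum_mul_sum, Finset.mul_sum]
    rw [Finset.sum_comm]
    congr 1; ext i
    rw [Finset.sum_comm]
    congr 1; ext i'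
    congr 1; ext j
    ring
  rw [expand, expand]
  refine Finset.sum_le_sum fun i _ => Finset.sum_le_sum fun i' _ => ?_
  set S := ∑ j, Θ i j * Θ i' j with hS
  -- key: 0 ≤ m i * m i' * S
  have hkey : 0 ≤ m i * m i' * S := by
    have hmonu : ∀ j k : Fin p, j ≤ k → m i * Θ i j ≤ m i * Θ i k := by
      rcases hm i with ⟨h1, h2⟩ | ⟨h1, h2, _⟩ <;> intro j k hjk
      · rw [h1]; simpa using h2 j k hjk
      · rw [h1]; simpa using h2 j k hjk
    have hmonv : ∀ j k : Fin p, j ≤ k → m i' * Θ i' j ≤ m i' * Θ i' k := by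
      rcases hm i' with ⟨h1, h2⟩ | ⟨h1, h2, _⟩ <;> intro j k hjk
      · rw [h1]; simpa using h2 j k hjk
      · rw [h1]; simpa using h2 j k hjk
    have hsu : ∑ j, m i * Θ i j = 0 := by
      rw [← Finset.mul_sum, hcenter i, mul_zero]
    have := cheb_nonneg (fun j => m i * Θ i j) (fun j => m i' * Θ i' j)
      hmonu hmonv hsu
    calc 0 ≤ ∑ j, (m i * Θ i j) * (m i' * Θ i' j) := this
    _ = m i * m i' * S := by rw [hS, Finset.mul_sum]; congr 1; ext j; ring
  have hmi : m i = 1 ∨ m i = -1 := by rcases hm i with ⟨h, _⟩ | ⟨h, _⟩ <;> tauto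
  have hmi' : m i' = 1 ∨ m i' = -1 := by rcases hm i' with ⟨h, _⟩ | ⟨h, _⟩ <;> tauto
  have habs : |S| = m i * m i' * S := by
    rcases hmi with h | h <;> rcases hmi' with h' | h' <;>
      simp [h, h'] at hkey ⊢ <;> exact hkey
  calc x i * x i' * S ≤ |x i * x i' * S| := le_abs_self _
    _ = |x i| * |x i'| * |S| := by rw [abs_mul, abs_mul]
    _ = (m i * |x i|) * (m i' * |x i'|) * S := by rw [habs]; ring
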